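/- arXiv:2106.13830 — 7 statements merged into one kernel-verified Lean document; each statement's English description precedes it below -/
import Mathlib

section
/- Under the Markov blanket condition Π_{ημ} = 0, the block identities Π_μ Σ_{μb} = −Π_{μb} Σ_b and Π_η Σ_{ηb} = −Π_{ηb} Σ_b hold. -/
open Matrix

/-- Under the Markov blanket condition `Π_{ημ} = 0`, the block identities
`Π_μ Σ_{μb} = −Π_{μb} Σ_b` and `Π_η Σ_{ηb} = −Π_{ηb} Σ_b` hold, where `Σ := Π⁻¹`
(`Prec` plays the role of the precision matrix `Π`, and `Cov := Prec⁻¹` that of `Σ`;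
the index blocks are `η = Sum.inl`, `b = Sum.inr ∘ Sum.inl`, `μ = Sum.inr ∘ Sum.inr`). -/
theorem stmt_1 (dη db dμ : ℕ) (hdη : 0 < dη) (hdb : 0 < db) (hdμ : 0 < dμ)
    (Prec : Matrix (Fin dη ⊕ (Fin db ⊕ Fin dμ)) (Fin dη ⊕ (Fin db ⊕ Fin dμ)) ℝ)
    (hPrec : Prec.PosDef)
    (hMB : Prec.submatrix Sum.inl (Sum.inr ∘ Sum.inr) = 0) :
    let Cov := Prec⁻¹
    Prec.submatrix (Sum.inr ∘ Sum.inr) (Sum.inr ∘ Sum.inr) *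
        Cov.submatrix (Sum.inr ∘ Sum.inr) (Sum.inr ∘ Sum.inl) =
      -(Prec.submatrix (Sum.inr ∘ Sum.inr) (Sum.inr ∘ Sum.inl) *
        Cov.submatrix (Sum.inr ∘ Sum.inl) (Sum.inr ∘ Sum.inl)) ∧
    Prec.submatrix Sum.inl Sum.inl * Cov.submatrix Sum.inl (Sum.inr ∘ Sum.inl) =
      -(Prec.submatrix Sum.inl (Sum.inr ∘ Sum.inl) *
        Cov.submatrix (Sum.inr ∘ Sum.inl) (Sum.inr ∘ Sum.inl)) := by
  intro Cov
  have hdet : IsUnit Prec.det := isUnit_iff_ne_zero.mpr hPrec.det_pos.ne'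
  have hPP : Prec * Prec⁻¹ = 1 := Prec.mul_nonsing_inv hdet
  have hsym : Precᵀ = Prec := hPrec.1
  have hMB1 : ∀ (k : Fin dη) (i : Fin dμ),
      Prec (Sum.inl k) (Sum.inr (Sum.inr i)) = 0 := by
    intro k i
    have := congrFun (congrFun hMB k) i
    simpa using this
  have hMB2 : ∀ (i : Fin dμ) (k : Fin dη),
      Prec (Sum.inr (Sum.inr i)) (Sum.inl k) = 0 := by
    intro i k
    have := congrFun (congrFun hsym (Sum.inl k)) (Sum.inr (Sum.inr i))
    simp only [Matrix.transpose_apply] at this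
    rw [this]; exact hMB1 k i
  constructor
  · ext i j
    have h0 : (Prec * Prec⁻¹) (Sum.inr (Sum.inr i)) (Sum.inr (Sum.inl j)) = 0 := by
      rw [hPP]; simp [Matrix.one_apply]
    simp only [Matrix.mul_apply, Fintype.sum_sum_type, Matrix.submatrix_apply,
      Function.comp_apply, Matrix.neg_apply] at h0 ⊢
    have hz : ∑ k : Fin dη,
        Prec (Sum.inr (Sum.inr i)) (Sum.inl k) * Prec⁻¹ (Sum.inl k) (Sum.inr (Sum.inl j)) = 0 := by
      apply Finset.sum_eq_zero
      intro k _
      rw [hMB2 i k]; ring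
    rw [hz, zero_add] at h0
    linarith
  · ext i j
    have h0 : (Prec * Prec⁻¹) (Sum.inl i) (Sum.inr (Sum.inl j)) = 0 := by
      rw [hPP]; simp [Matrix.one_apply]
    simp only [Matrix.mul_apply, Fintype.sum_sum_type, Matrix.submatrix_apply,
      Function.comp_apply, Matrix.neg_apply] at h0 ⊢
    have hz : ∑ k : Fin dμ,
        Prec (Sum.inl i) (Sum.inr (Sum.inr k)) * Prec⁻¹ (Sum.inr (Sum.inr k)) (Sum.inr (Sum.inl j)) = 0 := by
      apply Finset.sum_eq_zero
      intro k _
      rw [hMB1 i k]; ring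
    rw [hz] at h0
    linarith
end

section
/- Under the Markov blanket condition Π_{ημ} = 0, for every x = (η, b, μ) ∈ ℝ^d one has the factorisation of the quadratic form xᵀ Π x = [η, b]ᵀ (Σ_{η:b})⁻¹ [η, b] + [b, μ]ᵀ (Σ_{b:μ})⁻¹ [b, μ] − bᵀ Σ_b⁻¹ b. -/
open Matrix

section Helpers

variable {m n : Type*} [Fintype m] [Fintype n]

lemma stmt3_posDef_submatrix_inr {M : Matrix (m ⊕ n) (m ⊕ n) ℝ} (hM : M.PosDef) :
    (M.submatrix Sum.inr Sum.inr).PosDef := by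
  refine Matrix.PosDef.of_dotProduct_mulVec_pos (hM.isHermitian.submatrix _) fun x hx => ?_
  have hy : (Sum.elim 0 x : m ⊕ n → ℝ) ≠ 0 := by
    intro h; apply hx; funext i; exact congrFun h (Sum.inr i)
  have := hM.dotProduct_mulVec_pos hy
  simpa [dotProduct, mulVec, Fintype.sum_sum_type] using this

lemma stmt3_posDef_submatrix_inl {M : Matrix (m ⊕ n) (m ⊕ n) ℝ} (hM : M.PosDef) :
    (M.submatrix Sum.inl Sum.inl).PosDef := by
  refine Matrix.PosDef.of_dotProduct_mulVec_pos (hM.isHermitian.submatrix _) fun x hx => ?_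
  have hy : (Sum.elim x 0 : m ⊕ n → ℝ) ≠ 0 := by
    intro h; apply hx; funext i; exact congrFun h (Sum.inl i)
  have := hM.dotProduct_mulVec_pos hy
  simpa [dotProduct, mulVec, Fintype.sum_sum_type] using this

lemma stmt3_posDef_submatrix_equiv {l : Type*} [Fintype l] {M : Matrix m m ℝ}
    (hM : M.PosDef) (e : l ≃ m) : (M.submatrix e e).PosDef := by
  refine Matrix.PosDef.of_dotProduct_mulVec_pos (hM.isHermitian.submatrix _) fun x hx => ?_
  have hy : (x ∘ e.symm : m → ℝ) ≠ 0 := by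
    intro h; apply hx; funext i; simpa using congrFun h (e i)
  have := hM.dotProduct_mulVec_pos hy
  have h1 : (M.submatrix e e) *ᵥ x = fun i => (M *ᵥ (x ∘ e.symm)) (e i) := by
    funext i
    simp only [mulVec, dotProduct, submatrix_apply]
    rw [← Equiv.sum_comp e (fun j => M (e i) j * (x ∘ ⇑e.symm) j)]
    simp
  rw [h1]
  simp only [star_trivial] at this ⊢
  calc x ⬝ᵥ (fun i => (M *ᵥ (x ∘ ⇑e.symm)) (e i))
      = (x ∘ e.symm) ⬝ᵥ (M *ᵥ (x ∘ ⇑e.symm)) := by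
        simp only [dotProduct]
        rw [← Equiv.sum_comp e (fun j => (x ∘ ⇑e.symm) j * (M *ᵥ (x ∘ ⇑e.symm)) j)]
        simp
    _ > 0 := this

variable [DecidableEq m] [DecidableEq n]

lemma stmt3_key (M : Matrix (m ⊕ n) (m ⊕ n) ℝ) (hM : M.PosDef) :
    (M⁻¹.submatrix Sum.inl Sum.inl)⁻¹ =
      M.submatrix Sum.inl Sum.inl -
        M.submatrix Sum.inl Sum.inr * (M.submatrix Sum.inr Sum.inr)⁻¹ *
          M.submatrix Sum.inr Sum.inl := by
  set A := M.submatrix Sum.inl Sum.inl with hA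
  set B := M.submatrix Sum.inl Sum.inr with hB
  set C := M.submatrix Sum.inr Sum.inl with hC
  set D := M.submatrix Sum.inr Sum.inr with hD
  have hMf : fromBlocks A B C D = M := by
    ext (i | i) (j | j) <;> rfl
  have hDpd : D.PosDef := stmt3_posDef_submatrix_inr hM
  letI : Invertible D := hDpd.isUnit.invertible
  letI iM : Invertible M := hM.isUnit.invertible
  letI : Invertible (fromBlocks A B C D) := hMf ▸ iM
  letI iS : Invertible (A - B * ⅟D * C) := invertibleOfFromBlocks₂₂Invertible A B C D
  have h1 : M⁻¹ = fromBlocks (⅟ (A - B * ⅟D * C)) (-(⅟ (A - B * ⅟D * C) * B * ⅟ D))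
      (-(⅟ D * C * ⅟ (A - B * ⅟D * C))) (⅟ D + ⅟ D * C * ⅟ (A - B * ⅟D * C) * B * ⅟ D) := by
    rw [← hMf, ← invOf_eq_nonsing_inv, invOf_fromBlocks₂₂_eq]
  have h2 : M⁻¹.submatrix Sum.inl Sum.inl = ⅟ (A - B * ⅟D * C) := by
    rw [h1]; ext i j; rfl
  rw [h2, invOf_eq_nonsing_inv, inv_inv_of_invertible, invOf_eq_nonsing_inv]

/-- The equiv `β ⊕ (α ⊕ γ) ≃ α ⊕ (β ⊕ γ)` pulling the middle block to the front. -/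
def stmt3Equiv (α β γ : Type*) : β ⊕ (α ⊕ γ) ≃ α ⊕ (β ⊕ γ) where
  toFun := Sum.elim (Sum.inr ∘ Sum.inl) (Sum.elim Sum.inl (Sum.inr ∘ Sum.inr))
  invFun := Sum.elim (Sum.inr ∘ Sum.inl) (Sum.elim Sum.inl (Sum.inr ∘ Sum.inr))
  left_inv := by rintro (x | (x | x)) <;> rfl
  right_inv := by rintro (x | (x | x)) <;> rfl

end Helpers

/-- Under the Markov blanket condition `Π_{ημ} = 0`, for every
`x = (η, b, μ) ∈ ℝ^d` the quadratic form factorises as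
`xᵀ Π x = [η,b]ᵀ (Σ_{η:b})⁻¹ [η,b] + [b,μ]ᵀ (Σ_{b:μ})⁻¹ [b,μ] − bᵀ Σ_b⁻¹ b`.
Here `Prec` is the precision matrix `Π` and `Cov := Prec⁻¹` is `Σ`; the index blocks are
`η = Sum.inl`, `b = Sum.inr ∘ Sum.inl`, `μ = Sum.inr ∘ Sum.inr`. -/
theorem stmt_3 (dη db dμ : ℕ) (hdη : 0 < dη) (hdb : 0 < db) (hdμ : 0 < dμ)
    (Prec : Matrix (Fin dη ⊕ (Fin db ⊕ Fin dμ)) (Fin dη ⊕ (Fin db ⊕ Fin dμ)) ℝ)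
    (hPrec : Prec.PosDef)
    (hMB : Prec.submatrix Sum.inl (Sum.inr ∘ Sum.inr) = 0)
    (x : (Fin dη ⊕ (Fin db ⊕ Fin dμ)) → ℝ) :
    let Cov := Prec⁻¹
    let η : Fin dη → ℝ := fun i => x (Sum.inl i)
    let b : Fin db → ℝ := fun i => x (Sum.inr (Sum.inl i))
    let μ : Fin dμ → ℝ := fun i => x (Sum.inr (Sum.inr i))
    let Cηb := Cov.submatrix (Sum.elim Sum.inl (Sum.inr ∘ Sum.inl))
      (Sum.elim Sum.inl (Sum.inr ∘ Sum.inl))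
    let Cbμ := Cov.submatrix (Sum.inr : Fin db ⊕ Fin dμ → _) Sum.inr
    let Cb := Cov.submatrix (Sum.inr ∘ Sum.inl : Fin db → _) (Sum.inr ∘ Sum.inl)
    x ⬝ᵥ Prec *ᵥ x =
      Sum.elim η b ⬝ᵥ Cηb⁻¹ *ᵥ Sum.elim η b +
        Sum.elim b μ ⬝ᵥ Cbμ⁻¹ *ᵥ Sum.elim b μ -
        b ⬝ᵥ Cb⁻¹ *ᵥ b := by
  intro Cov η b μ Cηb Cbμ Cb
  -- pointwise Markov blanket conditions
  have h0 : ∀ i j, Prec (Sum.inl i) (Sum.inr (Sum.inr j)) = 0 := by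
    intro i j
    simpa using congrFun (congrFun hMB i) j
  have h0' : ∀ i j, Prec (Sum.inr (Sum.inr i)) (Sum.inl j) = 0 := by
    intro i j
    have h := congrFun (congrFun hPrec.isHermitian (Sum.inr (Sum.inr i))) (Sum.inl j)
    simpa [conjTranspose_apply, h0] using h.symm
  -- blocks of Prec
  set A := Prec.submatrix Sum.inl Sum.inl with hAdef
  set P := Prec.submatrix Sum.inl (Sum.inr ∘ Sum.inl) with hPdef
  set Q := Prec.submatrix (Sum.inr ∘ Sum.inl) Sum.inl with hQdef
  set R := Prec.submatrix (Sum.inr ∘ Sum.inl) (Sum.inr ∘ Sum.inl) with hRdef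
  set S := Prec.submatrix (Sum.inr ∘ Sum.inl) (Sum.inr ∘ Sum.inr) with hSdef
  set S' := Prec.submatrix (Sum.inr ∘ Sum.inr) (Sum.inr ∘ Sum.inl) with hS'def
  set W := Prec.submatrix (Sum.inr ∘ Sum.inr) (Sum.inr ∘ Sum.inr) with hWdef
  -- ===== formula for Cbμ⁻¹ =====
  have hCbμ : Cbμ⁻¹ = Prec.submatrix Sum.inr Sum.inr -
      Prec.submatrix Sum.inr Sum.inl * A⁻¹ * Prec.submatrix Sum.inl Sum.inr := by
    set e : (Fin db ⊕ Fin dμ) ⊕ Fin dη ≃ Fin dη ⊕ (Fin db ⊕ Fin dμ) :=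
      Equiv.sumComm _ _ with he
    set M₂ := Prec.submatrix e e with hM₂
    have hM₂pd : M₂.PosDef := stmt3_posDef_submatrix_equiv hPrec e
    have hC : Cbμ = M₂⁻¹.submatrix Sum.inl Sum.inl := by
      show Prec⁻¹.submatrix _ _ = _
      rw [hM₂, inv_submatrix_equiv]
      ext i j; rfl
    rw [hC, stmt3_key M₂ hM₂pd]
    have e11 : M₂.submatrix Sum.inl Sum.inl = Prec.submatrix Sum.inr Sum.inr := by
      ext i j; rfl
    have e12 : M₂.submatrix Sum.inl Sum.inr = Prec.submatrix Sum.inr Sum.inl := by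
      ext i j; rfl
    have e21 : M₂.submatrix Sum.inr Sum.inl = Prec.submatrix Sum.inl Sum.inr := by
      ext i j; rfl
    have e22 : M₂.submatrix Sum.inr Sum.inr = A := by
      ext i j; rfl
    rw [e11, e12, e21, e22]
  -- ===== formula for Cηb⁻¹ =====
  obtain ⟨U₁, V₁, hCηb, hU₁, hV₁⟩ : ∃ (U₁ : Matrix (Fin dη ⊕ Fin db) (Fin dμ) ℝ)
      (V₁ : Matrix (Fin dμ) (Fin dη ⊕ Fin db) ℝ),
      Cηb⁻¹ = fromBlocks A P Q R - U₁ * W⁻¹ * V₁ ∧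
      (∀ w, U₁ *ᵥ w = Sum.elim (0 : Fin dη → ℝ) (S *ᵥ w)) ∧
      (V₁ *ᵥ Sum.elim η b = S' *ᵥ b) := by
    set e : (Fin dη ⊕ Fin db) ⊕ Fin dμ ≃ Fin dη ⊕ (Fin db ⊕ Fin dμ) :=
      Equiv.sumAssoc _ _ _ with he
    set M₁ := Prec.submatrix e e with hM₁
    have hM₁pd : M₁.PosDef := stmt3_posDef_submatrix_equiv hPrec e
    have hC : Cηb = M₁⁻¹.submatrix Sum.inl Sum.inl := by
      show Prec⁻¹.submatrix _ _ = _
      rw [hM₁, inv_submatrix_equiv]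
      ext (i | i) (j | j) <;> rfl
    refine ⟨M₁.submatrix Sum.inl Sum.inr, M₁.submatrix Sum.inr Sum.inl, ?_, ?_, ?_⟩
    · rw [hC, stmt3_key M₁ hM₁pd]
      have e11 : M₁.submatrix Sum.inl Sum.inl = fromBlocks A P Q R := by
        ext (i | i) (j | j) <;> rfl
      have e22 : M₁.submatrix Sum.inr Sum.inr = W := by
        ext i j; rfl
      rw [e11, e22]
    · intro w
      funext i
      rcases i with i | i <;>
        simp [mulVec, dotProduct, hM₁, he, h0, hSdef]
    · funext k
      simp [mulVec, dotProduct, hM₁, he, Fintype.sum_sum_type, h0', hS'def]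
  -- ===== formula for Cb⁻¹ =====
  obtain ⟨U₃, V₃, hCb, hU₃, hV₃⟩ : ∃ (U₃ : Matrix (Fin db) (Fin dη ⊕ Fin dμ) ℝ)
      (V₃ : Matrix (Fin dη ⊕ Fin dμ) (Fin db) ℝ),
      Cb⁻¹ = R - U₃ * fromBlocks A⁻¹ 0 0 W⁻¹ * V₃ ∧
      (∀ (u : Fin dη → ℝ) (v : Fin dμ → ℝ), U₃ *ᵥ Sum.elim u v = Q *ᵥ u + S *ᵥ v) ∧
      (V₃ *ᵥ b = Sum.elim (P *ᵥ b) (S' *ᵥ b)) := by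
    set e := stmt3Equiv (Fin dη) (Fin db) (Fin dμ) with he
    set M₃ := Prec.submatrix e e with hM₃
    have hM₃pd : M₃.PosDef := stmt3_posDef_submatrix_equiv hPrec e
    have hC : Cb = M₃⁻¹.submatrix Sum.inl Sum.inl := by
      show Prec⁻¹.submatrix _ _ = _
      rw [hM₃, inv_submatrix_equiv]
      ext i j; rfl
    refine ⟨M₃.submatrix Sum.inl Sum.inr, M₃.submatrix Sum.inr Sum.inl, ?_, ?_, ?_⟩
    · rw [hC, stmt3_key M₃ hM₃pd]
      have e11 : M₃.submatrix Sum.inl Sum.inl = R := by ext i j; rfl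
      have e22 : M₃.submatrix Sum.inr Sum.inr = fromBlocks A 0 0 W := by
        ext (i | i) (j | j) <;>
          simp [hM₃, he, stmt3Equiv, fromBlocks, h0, h0', hAdef, hWdef, Equiv.coe_fn_mk]
      have hApd : A.PosDef := stmt3_posDef_submatrix_inl hPrec
      have hWpd : W.PosDef := by
        have h2 := stmt3_posDef_submatrix_inr (stmt3_posDef_submatrix_inr hPrec)
        have : W = (Prec.submatrix Sum.inr Sum.inr).submatrix Sum.inr Sum.inr := by
          ext i j; rfl
        rw [this]; exact h2
      have hinv : (fromBlocks A 0 0 W)⁻¹ = fromBlocks A⁻¹ 0 0 W⁻¹ := by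
        apply inv_eq_right_inv
        rw [fromBlocks_multiply]
        simp [Matrix.mul_nonsing_inv _ ((Matrix.isUnit_iff_isUnit_det _).1 hApd.isUnit),
          Matrix.mul_nonsing_inv _ ((Matrix.isUnit_iff_isUnit_det _).1 hWpd.isUnit),
          fromBlocks_one]
      rw [e11, e22, hinv]
    · intro u v
      funext i
      simp [mulVec, dotProduct, hM₃, he, stmt3Equiv, Fintype.sum_sum_type, hQdef, hSdef]
    · funext k
      rcases k with k | k <;>
        simp [mulVec, dotProduct, hM₃, he, stmt3Equiv, hPdef, hS'def]
  -- ===== final computation =====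
  have hx : x = Sum.elim η (Sum.elim b μ) := by
    funext i
    rcases i with i | (i | i) <;> rfl
  have hPrecBlocks : Prec = fromBlocks A (Prec.submatrix Sum.inl Sum.inr)
      (Prec.submatrix Sum.inr Sum.inl) (Prec.submatrix Sum.inr Sum.inr) := by
    ext (i | i) (j | j) <;> rfl
  have hBU : Prec.submatrix Sum.inr Sum.inr = fromBlocks R S S' W := by
    ext (i | i) (j | j) <;> rfl
  have hV₂ : Prec.submatrix Sum.inl Sum.inr *ᵥ Sum.elim b μ = P *ᵥ b := by
    funext i
    simp [mulVec, dotProduct, Fintype.sum_sum_type, h0, hPdef]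
  have hU₂ : ∀ w, Prec.submatrix Sum.inr Sum.inl *ᵥ w = Sum.elim (Q *ᵥ w) 0 := by
    intro w
    funext i
    rcases i with i | i <;> simp [mulVec, dotProduct, h0', hQdef]
  -- expand LHS
  have hLHS : x ⬝ᵥ Prec *ᵥ x =
      η ⬝ᵥ (A *ᵥ η) + η ⬝ᵥ (P *ᵥ b) + b ⬝ᵥ (Q *ᵥ η) +
        (b ⬝ᵥ (R *ᵥ b) + b ⬝ᵥ (S *ᵥ μ)) + (μ ⬝ᵥ (S' *ᵥ b) + μ ⬝ᵥ (W *ᵥ μ)) := by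
    conv_lhs => rw [hx, hPrecBlocks]
    rw [fromBlocks_mulVec]
    simp only [Sum.elim_comp_inl, Sum.elim_comp_inr]
    rw [sumElim_dotProduct_sumElim, hV₂, hU₂ η, hBU, fromBlocks_mulVec]
    simp only [Sum.elim_comp_inl, Sum.elim_comp_inr]
    simp [dotProduct_add, sumElim_dotProduct_sumElim]
    ring
  -- expand the three RHS terms
  have hT1 : Sum.elim η b ⬝ᵥ Cηb⁻¹ *ᵥ Sum.elim η b =
      η ⬝ᵥ (A *ᵥ η) + η ⬝ᵥ (P *ᵥ b) + b ⬝ᵥ (Q *ᵥ η) + b ⬝ᵥ (R *ᵥ b)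
        - b ⬝ᵥ (S *ᵥ (W⁻¹ *ᵥ (S' *ᵥ b))) := by
    rw [hCηb, sub_mulVec, dotProduct_sub]
    rw [← mulVec_mulVec, ← mulVec_mulVec, hV₁, hU₁, fromBlocks_mulVec]
    simp only [Sum.elim_comp_inl, Sum.elim_comp_inr]
    rw [sumElim_dotProduct_sumElim, sumElim_dotProduct_sumElim]
    simp [dotProduct_add]
    ring
  have hT2 : Sum.elim b μ ⬝ᵥ Cbμ⁻¹ *ᵥ Sum.elim b μ =
      b ⬝ᵥ (R *ᵥ b) + b ⬝ᵥ (S *ᵥ μ) + μ ⬝ᵥ (S' *ᵥ b) + μ ⬝ᵥ (W *ᵥ μ)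
        - b ⬝ᵥ (Q *ᵥ (A⁻¹ *ᵥ (P *ᵥ b))) := by
    rw [hCbμ, sub_mulVec, dotProduct_sub]
    rw [← mulVec_mulVec, ← mulVec_mulVec, hV₂, hU₂, hBU, fromBlocks_mulVec]
    simp only [Sum.elim_comp_inl, Sum.elim_comp_inr]
    rw [sumElim_dotProduct_sumElim, sumElim_dotProduct_sumElim]
    simp [dotProduct_add]
    ring
  have hT3 : b ⬝ᵥ Cb⁻¹ *ᵥ b =
      b ⬝ᵥ (R *ᵥ b) - (b ⬝ᵥ (Q *ᵥ (A⁻¹ *ᵥ (P *ᵥ b))) + b ⬝ᵥ (S *ᵥ (W⁻¹ *ᵥ (S' *ᵥ b)))) := by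
    rw [hCb, sub_mulVec, dotProduct_sub]
    rw [← mulVec_mulVec, ← mulVec_mulVec, hV₃, fromBlocks_mulVec]
    simp only [Sum.elim_comp_inl, Sum.elim_comp_inr, Matrix.zero_mulVec, add_zero, zero_add]
    rw [hU₃, dotProduct_add]
  rw [hLHS, hT1, hT2, hT3]
  ring
end

section
/- Under the Markov blanket condition Π_{ημ} = 0, the conditional covariance of the external block given the blanket block equals the inverse of the corresponding principal submatrix of the precision matrix: Σ_η − Σ_{ηb} Σ_b⁻¹ Σ_{bη} = Π_η⁻¹; and analogously Σ_μ − Σ_{μb} Σ_b⁻¹ Σ_{bμ} = Π_μ⁻¹. -/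
open Matrix


variable {m n : Type*} [Fintype m] [Fintype n] [DecidableEq m] [DecidableEq n]

lemma posDef_blocks {M : Matrix (m ⊕ n) (m ⊕ n) ℝ} (hM : M.PosDef) :
    M.toBlocks₁₁.PosDef ∧ M.toBlocks₂₂.PosDef := by
  constructor
  · refine posDef_iff_dotProduct_mulVec.mpr ⟨?_, fun x hx => ?_⟩
    · ext i j
      have := congrFun (congrFun hM.1 (Sum.inl i)) (Sum.inl j)
      simpa [conjTranspose_apply, toBlocks₁₁] using this
    · have hxe : (Sum.elim x 0 : m ⊕ n → ℝ) ≠ 0 := by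
        intro h; apply hx; ext i; exact congrFun h (Sum.inl i)
      have := (posDef_iff_dotProduct_mulVec.mp hM).2 hxe
      have hcalc : star (Sum.elim x 0) ⬝ᵥ M *ᵥ Sum.elim x 0
          = star x ⬝ᵥ M.toBlocks₁₁ *ᵥ x := by
        rw [← fromBlocks_toBlocks M, fromBlocks_mulVec]
        simp [dotProduct, Fintype.sum_sum_type]
      rwa [hcalc] at this
  · refine posDef_iff_dotProduct_mulVec.mpr ⟨?_, fun x hx => ?_⟩
    · ext i j
      have := congrFun (congrFun hM.1 (Sum.inr i)) (Sum.inr j)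
      simpa [conjTranspose_apply, toBlocks₂₂] using this
    · have hxe : (Sum.elim 0 x : m ⊕ n → ℝ) ≠ 0 := by
        intro h; apply hx; ext i; exact congrFun h (Sum.inr i)
      have := (posDef_iff_dotProduct_mulVec.mp hM).2 hxe
      have hcalc : star (Sum.elim 0 x) ⬝ᵥ M *ᵥ Sum.elim 0 x
          = star x ⬝ᵥ M.toBlocks₂₂ *ᵥ x := by
        rw [← fromBlocks_toBlocks M, fromBlocks_mulVec]
        simp [dotProduct, Fintype.sum_sum_type]
      rwa [hcalc] at this

lemma posDef_submatrix_equiv {M : Matrix n n ℝ} (hM : M.PosDef) (e : m ≃ n) :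
    (M.submatrix e e).PosDef := by
  refine posDef_iff_dotProduct_mulVec.mpr ⟨?_, fun x hx => ?_⟩
  · ext i j
    have := congrFun (congrFun hM.1 (e i)) (e j)
    simpa [conjTranspose_apply] using this
  · have hxe : (x ∘ e.symm : n → ℝ) ≠ 0 := by
      intro h; apply hx; ext i; simpa using congrFun h (e i)
    have := (posDef_iff_dotProduct_mulVec.mp hM).2 hxe
    have hcalc : star (x ∘ e.symm) ⬝ᵥ M *ᵥ (x ∘ e.symm)
        = star x ⬝ᵥ (M.submatrix e e) *ᵥ x := by
      simp only [dotProduct, mulVec, Function.comp, submatrix_apply, Pi.star_apply]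
      rw [← Equiv.sum_comp e (fun j => star (x (e.symm j)) * ∑ k, M j k * x (e.symm k))]
      refine Finset.sum_congr rfl fun i _ => ?_
      rw [Equiv.symm_apply_apply]
      congr 1
      rw [← Equiv.sum_comp e (fun k => M (e i) k * x (e.symm k))]
      simp
    rwa [hcalc] at this

set_option maxHeartbeats 1000000 in
lemma schur_key {A : Matrix m m ℝ} {B : Matrix m n ℝ} {C : Matrix n m ℝ} {D : Matrix n n ℝ}
    (h : (fromBlocks A B C D).PosDef) :
    ((fromBlocks A B C D)⁻¹).toBlocks₁₁ -
      ((fromBlocks A B C D)⁻¹).toBlocks₁₂ * (((fromBlocks A B C D)⁻¹).toBlocks₂₂)⁻¹ *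
        ((fromBlocks A B C D)⁻¹).toBlocks₂₁ = A⁻¹ := by
  have hA : A.PosDef := by
    have := (posDef_blocks h).1
    rwa [toBlocks_fromBlocks₁₁] at this
  letI : Invertible A := hA.isUnit.invertible
  letI : Invertible (fromBlocks A B C D) := h.isUnit.invertible
  letI iT : Invertible (D - C * ⅟A * B) := invertibleOfFromBlocks₁₁Invertible A B C D
  have hinv : (fromBlocks A B C D)⁻¹ =
      fromBlocks (⅟A + ⅟A * B * ⅟(D - C * ⅟A * B) * C * ⅟A)
        (-(⅟A * B * ⅟(D - C * ⅟A * B))) (-(⅟(D - C * ⅟A * B) * C * ⅟A))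
        (⅟(D - C * ⅟A * B)) := by
    rw [← invOf_eq_nonsing_inv, invOf_fromBlocks₁₁_eq]
  rw [hinv]
  simp only [toBlocks_fromBlocks₁₁, toBlocks_fromBlocks₁₂, toBlocks_fromBlocks₂₁,
    toBlocks_fromBlocks₂₂]
  rw [invOf_eq_nonsing_inv (D - C * ⅟A * B), inv_inv_of_invertible, ← invOf_eq_nonsing_inv A]
  simp only [Matrix.neg_mul, Matrix.mul_neg, neg_neg]
  rw [Matrix.inv_mul_cancel_right_of_invertible]
  simp only [Matrix.mul_assoc]
  abel

set_option maxHeartbeats 1000000 in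
lemma master {a b c : Type*} [Fintype a] [Fintype b] [Fintype c]
    [DecidableEq a] [DecidableEq b] [DecidableEq c]
    (P : Matrix ((a ⊕ b) ⊕ c) ((a ⊕ b) ⊕ c) ℝ) (hP : P.PosDef)
    (h0 : P.submatrix (Sum.inl ∘ Sum.inl) Sum.inr = 0) :
    (P⁻¹).submatrix (Sum.inl ∘ Sum.inl) (Sum.inl ∘ Sum.inl) -
      (P⁻¹).submatrix (Sum.inl ∘ Sum.inl) (Sum.inl ∘ Sum.inr) *
        ((P⁻¹).submatrix (Sum.inl ∘ Sum.inr) (Sum.inl ∘ Sum.inr))⁻¹ *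
        (P⁻¹).submatrix (Sum.inl ∘ Sum.inr) (Sum.inl ∘ Sum.inl)
      = (P.submatrix (Sum.inl ∘ Sum.inl) (Sum.inl ∘ Sum.inl))⁻¹ := by
  letI : Invertible P := hP.isUnit.invertible
  have hS : (P⁻¹).PosDef := hP.inv
  set W : Matrix (a ⊕ b) (a ⊕ b) ℝ := (P⁻¹).toBlocks₁₁ with hW
  have hWpd : W.PosDef := (posDef_blocks hS).1
  letI : Invertible W := hWpd.isUnit.invertible
  -- Step A : W⁻¹ in terms of P blocks
  have h2 := schur_key (A := (P⁻¹).toBlocks₁₁) (B := (P⁻¹).toBlocks₁₂)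
      (C := (P⁻¹).toBlocks₂₁) (D := (P⁻¹).toBlocks₂₂)
      (by rw [fromBlocks_toBlocks]; exact hS)
  rw [fromBlocks_toBlocks, Matrix.inv_inv_of_invertible] at h2
  -- h2 : P.toBlocks₁₁ - P.toBlocks₁₂ * (P.toBlocks₂₂)⁻¹ * P.toBlocks₂₁ = W⁻¹
  -- Step B : (W⁻¹).toBlocks₁₁ = the a-block of P
  have hz : (P.toBlocks₁₂).submatrix Sum.inl id = 0 := by
    ext i j; exact congrFun (congrFun h0 i) j
  have hB : (W⁻¹).toBlocks₁₁ = P.submatrix (Sum.inl ∘ Sum.inl) (Sum.inl ∘ Sum.inl) := by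
    rw [← h2]
    have : (P.toBlocks₁₂ * (P.toBlocks₂₂)⁻¹ * P.toBlocks₂₁).toBlocks₁₁ = 0 := by
      show (P.toBlocks₁₂ * (P.toBlocks₂₂)⁻¹ * P.toBlocks₂₁).submatrix Sum.inl Sum.inl = 0
      rw [Matrix.mul_assoc,
        Matrix.submatrix_mul _ _ Sum.inl id Sum.inl Function.bijective_id, hz,
        Matrix.zero_mul]
    have hsub : ((P.toBlocks₁₁ - P.toBlocks₁₂ * (P.toBlocks₂₂)⁻¹ * P.toBlocks₂₁)).toBlocks₁₁
        = (P.toBlocks₁₁).toBlocks₁₁ - (P.toBlocks₁₂ * (P.toBlocks₂₂)⁻¹ * P.toBlocks₂₁).toBlocks₁₁ := rfl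
    rw [hsub, this, sub_zero]
    rfl
  -- Step C : schur_key applied to W⁻¹
  have h3 := schur_key (A := (W⁻¹).toBlocks₁₁) (B := (W⁻¹).toBlocks₁₂)
      (C := (W⁻¹).toBlocks₂₁) (D := (W⁻¹).toBlocks₂₂)
      (by rw [fromBlocks_toBlocks]; exact hWpd.inv)
  rw [fromBlocks_toBlocks, Matrix.inv_inv_of_invertible, hB] at h3
  exact h3

def muEquiv (α β γ : Type*) : (γ ⊕ β) ⊕ α ≃ α ⊕ (β ⊕ γ) where
  toFun := Sum.elim (Sum.elim (Sum.inr ∘ Sum.inr) (Sum.inr ∘ Sum.inl)) Sum.inl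
  invFun := Sum.elim Sum.inr (Sum.elim (Sum.inl ∘ Sum.inr) (Sum.inl ∘ Sum.inl))
  left_inv := by rintro ((x | x) | x) <;> rfl
  right_inv := by rintro (x | (x | x)) <;> rfl

/-- Under the Markov blanket condition `Π_{ημ} = 0`, the conditional
covariances satisfy `Σ_η − Σ_{ηb} Σ_b⁻¹ Σ_{bη} = Π_η⁻¹` and
`Σ_μ − Σ_{μb} Σ_b⁻¹ Σ_{bμ} = Π_μ⁻¹`.
Here `Prec` is the precision matrix `Π` and `Cov := Prec⁻¹` is `Σ`; the index blocks are
`η = Sum.inl`, `b = Sum.inr ∘ Sum.inl`, `μ = Sum.inr ∘ Sum.inr`. -/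
theorem stmt_4 (dη db dμ : ℕ) (hdη : 0 < dη) (hdb : 0 < db) (hdμ : 0 < dμ)
    (Prec : Matrix (Fin dη ⊕ (Fin db ⊕ Fin dμ)) (Fin dη ⊕ (Fin db ⊕ Fin dμ)) ℝ)
    (hPrec : Prec.PosDef)
    (hMB : Prec.submatrix Sum.inl (Sum.inr ∘ Sum.inr) = 0) :
    let Cov := Prec⁻¹
    let Cη := Cov.submatrix Sum.inl Sum.inl
    let Cμ := Cov.submatrix (Sum.inr ∘ Sum.inr) (Sum.inr ∘ Sum.inr)
    let Cb := Cov.submatrix (Sum.inr ∘ Sum.inl) (Sum.inr ∘ Sum.inl)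
    let Cηb := Cov.submatrix Sum.inl (Sum.inr ∘ Sum.inl)
    let Cbη := Cov.submatrix (Sum.inr ∘ Sum.inl) Sum.inl
    let Cμb := Cov.submatrix (Sum.inr ∘ Sum.inr) (Sum.inr ∘ Sum.inl)
    let Cbμ := Cov.submatrix (Sum.inr ∘ Sum.inl) (Sum.inr ∘ Sum.inr)
    Cη - Cηb * Cb⁻¹ * Cbη = (Prec.submatrix Sum.inl Sum.inl)⁻¹ ∧
    Cμ - Cμb * Cb⁻¹ * Cbμ =
      (Prec.submatrix (Sum.inr ∘ Sum.inr) (Sum.inr ∘ Sum.inr))⁻¹ := by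
  intro Cov Cη Cμ Cb Cηb Cbη Cμb Cbμ
  constructor
  · set e := Equiv.sumAssoc (Fin dη) (Fin db) (Fin dμ) with he
    have hP : (Prec.submatrix ⇑e ⇑e).PosDef := posDef_submatrix_equiv hPrec e
    have h0 : (Prec.submatrix ⇑e ⇑e).submatrix (Sum.inl ∘ Sum.inl) Sum.inr = 0 := by
      ext i j; exact congrFun (congrFun hMB i) j
    have key := master _ hP h0
    rw [inv_submatrix_equiv] at key
    simp only [submatrix_submatrix] at key
    exact key
  · set e := muEquiv (Fin dη) (Fin db) (Fin dμ) with he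
    have hP : (Prec.submatrix ⇑e ⇑e).PosDef := posDef_submatrix_equiv hPrec e
    have h0 : (Prec.submatrix ⇑e ⇑e).submatrix (Sum.inl ∘ Sum.inl) Sum.inr = 0 := by
      ext i j
      show Prec (Sum.inr (Sum.inr i)) (Sum.inl j) = 0
      have := congrFun (congrFun hPrec.1 (Sum.inl j)) (Sum.inr (Sum.inr i))
      rw [conjTranspose_apply] at this
      have h00 : Prec (Sum.inl j) (Sum.inr (Sum.inr i)) = 0 := by
        simpa using congrFun (congrFun hMB j) i
      rw [h00] at this
      exact star_eq_zero.mp this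
    have key := master _ hP h0
    rw [inv_submatrix_equiv] at key
    simp only [submatrix_submatrix] at key
    exact key
end

section
/- The Markov blanket condition Π_{ημ} = 0 holds if and only if the row-block matrix [Σ_{ηb}, Σ_{ημ}] multiplied on the right by (Σ_{b:μ})⁻¹ equals the block matrix [Σ_{ηb} Σ_b⁻¹, 0]; in other words, the Gaussian conditional mean of η given (b, μ), namely [Σ_{ηb}, Σ_{ημ}] (Σ_{b:μ})⁻¹ [b, μ], equals Σ_{ηb} Σ_b⁻¹ b for all (b, μ) exactly when Π_{ημ} = 0. -/
open Matrix

lemma posDef_submatrix_of_injective {n m : Type*} [Fintype n] [Fintype m] [DecidableEq n]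
    {M : Matrix n n ℝ} (hM : M.PosDef) (f : m → n) (hf : Function.Injective f) :
    (M.submatrix f f).PosDef := by
  refine Matrix.PosDef.of_dotProduct_mulVec_pos (hM.isHermitian.submatrix f) fun x hx => ?_
  set y : n → ℝ := Function.extend f x 0 with hy
  have key : ∀ g : n → ℝ, ∑ j, y j * g j = ∑ i, x i * g (f i) := by
    intro g
    rw [show (∑ i, x i * g (f i)) = ∑ i, y (f i) * g (f i) by
      refine Finset.sum_congr rfl fun i _ => by rw [hy, hf.extend_apply]]
    rw [← Finset.sum_image (s := Finset.univ) (f := fun j => y j * g j)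
      (g := f) (fun a _ b _ hab => hf hab)]
    refine (Finset.sum_subset (Finset.subset_univ _) fun j _ hj => ?_).symm
    have : ¬∃ a, f a = j := by
      intro ⟨a, ha⟩
      exact hj (Finset.mem_image.2 ⟨a, Finset.mem_univ a, ha⟩)
    rw [hy, Function.extend_apply' _ _ _ this]
    simp
  have hyne : y ≠ 0 := by
    obtain ⟨i, hi⟩ := Function.ne_iff.1 hx
    refine Function.ne_iff.2 ⟨f i, ?_⟩
    rw [hy, hf.extend_apply]
    simpa using hi
  have h2 := hM.dotProduct_mulVec_pos hyne
  have heq : dotProduct (star x) ((M.submatrix f f) *ᵥ x) = dotProduct (star y) (M *ᵥ y) := by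
    simp only [star_trivial, dotProduct, mulVec, submatrix_apply]
    rw [key fun j => ∑ j', M j j' * y j']
    refine Finset.sum_congr rfl fun i _ => ?_
    congr 1
    rw [show (∑ j', M (f i) j' * y j') = ∑ j', y j' * M (f i) j' by
      exact Finset.sum_congr rfl fun j _ => mul_comm _ _]
    rw [key fun j' => M (f i) j']
    exact Finset.sum_congr rfl fun i' _ => mul_comm _ _
  rw [heq]
  exact h2


/-- The Markov blanket condition `Π_{ημ} = 0` holds iff
`[Σ_{ηb}, Σ_{ημ}] (Σ_{b:μ})⁻¹ = [Σ_{ηb} Σ_b⁻¹, 0]`; equivalently, the Gaussian conditional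
mean of `η` given `(b, μ)`, namely `[Σ_{ηb}, Σ_{ημ}] (Σ_{b:μ})⁻¹ [b, μ]`, equals
`Σ_{ηb} Σ_b⁻¹ b` for all `(b, μ)` exactly when `Π_{ημ} = 0`.
Here `Prec` is the precision matrix `Π` and `Cov := Prec⁻¹` is `Σ`; the index blocks are
`η = Sum.inl`, `b = Sum.inr ∘ Sum.inl`, `μ = Sum.inr ∘ Sum.inr`. -/
theorem stmt_5 (dη db dμ : ℕ) (hdη : 0 < dη) (hdb : 0 < db) (hdμ : 0 < dμ)
    (Prec : Matrix (Fin dη ⊕ (Fin db ⊕ Fin dμ)) (Fin dη ⊕ (Fin db ⊕ Fin dμ)) ℝ)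
    (hPrec : Prec.PosDef) :
    let Cov := Prec⁻¹
    let Cηb := Cov.submatrix Sum.inl (Sum.inr ∘ Sum.inl)
    let Cημ := Cov.submatrix Sum.inl (Sum.inr ∘ Sum.inr)
    let Cb := Cov.submatrix (Sum.inr ∘ Sum.inl) (Sum.inr ∘ Sum.inl)
    let Cbμ := Cov.submatrix (Sum.inr : Fin db ⊕ Fin dμ → _) Sum.inr
    (Prec.submatrix Sum.inl (Sum.inr ∘ Sum.inr) = 0 ↔
      fromCols Cηb Cημ * Cbμ⁻¹ = fromCols (Cηb * Cb⁻¹) 0) ∧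
    (Prec.submatrix Sum.inl (Sum.inr ∘ Sum.inr) = 0 ↔
      ∀ (b : Fin db → ℝ) (μ : Fin dμ → ℝ),
        (fromCols Cηb Cημ * Cbμ⁻¹) *ᵥ Sum.elim b μ = (Cηb * Cb⁻¹) *ᵥ b) := by
  intro Cov Cηb Cημ Cb Cbμ
  have hCov : Cov.PosDef := hPrec.inv
  set A : Matrix (Fin dη) (Fin dη) ℝ := Prec.submatrix Sum.inl Sum.inl with hAdef
  set B : Matrix (Fin dη) (Fin db ⊕ Fin dμ) ℝ := Prec.submatrix Sum.inl Sum.inr with hBdef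
  set S12 : Matrix (Fin dη) (Fin db ⊕ Fin dμ) ℝ := Cov.submatrix Sum.inl Sum.inr with hS12def
  have hA : A.PosDef := posDef_submatrix_of_injective hPrec Sum.inl Sum.inl_injective
  have hS22 : Cbμ.PosDef := posDef_submatrix_of_injective hCov Sum.inr Sum.inr_injective
  have hCb : Cb.PosDef := posDef_submatrix_of_injective hCov (Sum.inr ∘ Sum.inl)
    (Sum.inr_injective.comp Sum.inl_injective)
  have hAd : IsUnit A.det := hA.det_pos.ne'.isUnit
  have hS22d : IsUnit Cbμ.det := hS22.det_pos.ne'.isUnit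
  have hCbd : IsUnit Cb.det := hCb.det_pos.ne'.isUnit
  have h1 : Prec * Cov = 1 := Prec.mul_nonsing_inv hPrec.det_pos.ne'.isUnit
  -- the block identity A * S12 + B * Cbμ = 0
  have hblock : A * S12 + B * Cbμ = 0 := by
    ext i j
    have h := congrFun (congrFun h1 (Sum.inl i)) (Sum.inr j)
    simp only [mul_apply, Fintype.sum_sum_type, Matrix.one_apply, Matrix.zero_apply,
      Matrix.add_apply, submatrix_apply, Function.comp_apply] at h ⊢
    simpa [hAdef, hBdef, hS12def, Cbμ] using h
  have hBS : B * Cbμ = -(A * S12) := by linear_combination (norm := noncomm_ring) hblock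
  have hAS : A * S12 = -(B * Cbμ) := by linear_combination (norm := noncomm_ring) hblock
  -- main regression identity
  have hM : S12 * Cbμ⁻¹ = -(A⁻¹ * B) := by
    have : S12 = -(A⁻¹ * B * Cbμ) := by
      have := congrArg (fun M => A⁻¹ * M) hAS
      simpa [Matrix.nonsing_inv_mul_cancel_left _ _ hAd, Matrix.mul_assoc, neg_mul] using this
    rw [this]
    rw [Matrix.neg_mul, Matrix.mul_nonsing_inv_cancel_right _ _ hS22d]
  have hS12cols : fromCols Cηb Cημ = S12 := by
    ext i j
    cases j <;> rfl
  have hBcols : B = fromCols (Prec.submatrix Sum.inl (Sum.inr ∘ Sum.inl))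
      (Prec.submatrix Sum.inl (Sum.inr ∘ Sum.inr)) := by
    ext i j
    cases j <;> rfl
  have hS22blocks : Cbμ = fromBlocks Cb (Cov.submatrix (Sum.inr ∘ Sum.inl) (Sum.inr ∘ Sum.inr))
      (Cov.submatrix (Sum.inr ∘ Sum.inr) (Sum.inr ∘ Sum.inl))
      (Cov.submatrix (Sum.inr ∘ Sum.inr) (Sum.inr ∘ Sum.inr)) := by
    ext i j
    cases i <;> cases j <;> rfl
  -- the key iff
  have key : Prec.submatrix Sum.inl (Sum.inr ∘ Sum.inr) = 0 ↔
      fromCols Cηb Cημ * Cbμ⁻¹ = fromCols (Cηb * Cb⁻¹) 0 := by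
    constructor
    · intro h0
      -- M = fromCols M1 0
      have hMcols : S12 * Cbμ⁻¹ =
          fromCols (-(A⁻¹ * Prec.submatrix Sum.inl (Sum.inr ∘ Sum.inl))) 0 := by
        rw [hM, hBcols, h0, Matrix.mul_fromCols]
        ext i j
        cases j <;> simp [fromCols]
      -- recover first column: M1 * Cb = Cηb
      have hMS : (S12 * Cbμ⁻¹) * Cbμ = S12 := Matrix.nonsing_inv_mul_cancel_right _ _ hS22d
      rw [hMcols] at hMS
      rw [hS22blocks, fromCols_mul_fromBlocks] at hMS
      rw [← hS12cols] at hMS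
      rw [fromCols_ext_iff] at hMS
      have h1' : -(A⁻¹ * Prec.submatrix Sum.inl (Sum.inr ∘ Sum.inl)) * Cb = Cηb := by
        have := hMS.1
        simpa using this
      have hM1 : -(A⁻¹ * Prec.submatrix Sum.inl (Sum.inr ∘ Sum.inl)) = Cηb * Cb⁻¹ := by
        rw [← h1', Matrix.mul_nonsing_inv_cancel_right _ _ hCbd]
      rw [hS12cols, hMcols, hM1]
    · intro hEq
      have hAB : A⁻¹ * B = fromCols (-(Cηb * Cb⁻¹)) 0 := by
        have : -(A⁻¹ * B) = fromCols (Cηb * Cb⁻¹) 0 := by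
          rw [← hM, ← hS12cols, hEq]
        have h2 := congrArg Neg.neg this
        rw [neg_neg] at h2
        rw [h2]
        ext i j
        cases j <;> simp [fromCols]
      have hBeq : B = fromCols (A * -(Cηb * Cb⁻¹)) 0 := by
        have := congrArg (fun M => A * M) hAB
        beta_reduce at this
        rw [Matrix.mul_nonsing_inv_cancel_left _ _ hAd] at this
        rw [this, Matrix.mul_fromCols, Matrix.mul_zero]
      have := congrArg Matrix.toCols₂ hBeq
      rw [toCols₂_fromCols] at this
      rw [← this]
      ext i j
      rfl
  refine ⟨key, key.trans ?_⟩
  constructor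
  · intro h b μ
    rw [h, fromCols_mulVec_sumElim]
    simp
  · intro h
    rw [← hS12cols] at *
    -- show matrix equality from action on all vectors
    ext i j
    cases j with
    | inl j =>
      have hv := h (Pi.single j 1) 0
      have hel : Sum.elim (Pi.single j 1) (0 : Fin dμ → ℝ) =
          Pi.single (Sum.inl j : Fin db ⊕ Fin dμ) 1 := by
        ext (k | k)
        · by_cases hk : k = j <;> simp [hk, Pi.single, Function.update]
        · simp [Pi.single, Function.update]
      rw [hel, Matrix.mulVec_single, Matrix.mulVec_single] at hv
      have := congrFun hv i
      simpa [fromCols] using this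
    | inr j =>
      have hv := h 0 (Pi.single j 1)
      have hel : Sum.elim (0 : Fin db → ℝ) (Pi.single j 1) =
          Pi.single (Sum.inr j : Fin db ⊕ Fin dμ) 1 := by
        ext (k | k)
        · simp [Pi.single, Function.update]
        · by_cases hk : k = j <;> simp [hk, Pi.single, Function.update]
      rw [hel, Matrix.mulVec_single] at hv
      have := congrFun hv i
      simpa [fromCols] using this
end

section
/- The kernel inclusion ker Σ_{μb} ⊆ ker Σ_{ηb} holds if and only if there exists a matrix S ∈ ℝ^{dη×dμ} such that S Σ_{μb} = Σ_{ηb}; moreover, any such S satisfies S 𝛍(b) = 𝛈(b) for every blanket state b ∈ ℝ^{db}, i.e., the synchronisation map can be chosen to be linear. -/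
open Matrix

lemma factor_through {K V W₁ W₂ : Type*} [Field K] [AddCommGroup V] [Module K V]
    [AddCommGroup W₁] [Module K W₁] [AddCommGroup W₂] [Module K W₂]
    (f : V →ₗ[K] W₁) (g : V →ₗ[K] W₂) (hle : LinearMap.ker f ≤ LinearMap.ker g) :
    ∃ h : W₁ →ₗ[K] W₂, h ∘ₗ f = g := by
  let q : (V ⧸ LinearMap.ker f) →ₗ[K] W₂ := (LinearMap.ker f).liftQ g hle
  let e := f.quotKerEquivRange
  obtain ⟨h, hh⟩ := LinearMap.exists_extend (q ∘ₗ (e.symm : LinearMap.range f →ₗ[K] _))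
  refine ⟨h, ?_⟩
  ext x
  have h1 : h (f x) = q (e.symm ⟨f x, LinearMap.mem_range_self f x⟩) :=
    congrFun (congrArg DFunLike.coe hh) ⟨f x, LinearMap.mem_range_self f x⟩
  have h2 : e.symm ⟨f x, LinearMap.mem_range_self f x⟩ = Submodule.Quotient.mk x := by
    apply e.injective
    simp [e, LinearMap.quotKerEquivRange]
    rfl
  simp [h1, h2, q]

/-- The kernel inclusion `ker Σ_{μb} ⊆ ker Σ_{ηb}` holds iff there exists a
matrix `S ∈ ℝ^{dη×dμ}` with `S Σ_{μb} = Σ_{ηb}`; moreover any such `S` satisfies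
`S 𝛍(b) = 𝛈(b)` for every blanket state `b`, i.e. the synchronisation map can be chosen
linear. Here `Prec` is the precision matrix `Π`, `Cov := Prec⁻¹` is `Σ`,
`𝛈(b) = Σ_{ηb} Σ_b⁻¹ b`, `𝛍(b) = Σ_{μb} Σ_b⁻¹ b`; the index blocks are `η = Sum.inl`,
`b = Sum.inr ∘ Sum.inl`, `μ = Sum.inr ∘ Sum.inr`. -/
theorem stmt_7 (dη db dμ : ℕ) (hdη : 0 < dη) (hdb : 0 < db) (hdμ : 0 < dμ)
    (Prec : Matrix (Fin dη ⊕ (Fin db ⊕ Fin dμ)) (Fin dη ⊕ (Fin db ⊕ Fin dμ)) ℝ)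
    (hPrec : Prec.PosDef) :
    let Cov := Prec⁻¹
    let Cηb := Cov.submatrix Sum.inl (Sum.inr ∘ Sum.inl)
    let Cμb := Cov.submatrix (Sum.inr ∘ Sum.inr) (Sum.inr ∘ Sum.inl)
    let Cb := Cov.submatrix (Sum.inr ∘ Sum.inl) (Sum.inr ∘ Sum.inl)
    let ηf : (Fin db → ℝ) → (Fin dη → ℝ) := fun b => (Cηb * Cb⁻¹) *ᵥ b
    let μf : (Fin db → ℝ) → (Fin dμ → ℝ) := fun b => (Cμb * Cb⁻¹) *ᵥ b
    (LinearMap.ker Cμb.mulVecLin ≤ LinearMap.ker Cηb.mulVecLin ↔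
      ∃ S : Matrix (Fin dη) (Fin dμ) ℝ, S * Cμb = Cηb) ∧
    ∀ S : Matrix (Fin dη) (Fin dμ) ℝ, S * Cμb = Cηb →
      ∀ b : Fin db → ℝ, S *ᵥ μf b = ηf b := by
  intro Cov Cηb Cμb Cb ηf μf
  constructor
  · constructor
    · intro hle
      obtain ⟨h, hh⟩ := factor_through Cμb.mulVecLin Cηb.mulVecLin hle
      refine ⟨LinearMap.toMatrix' h, ?_⟩
      apply Matrix.toLin'.injective
      rw [Matrix.toLin'_mul, Matrix.toLin'_toMatrix', Matrix.toLin'_apply', Matrix.toLin'_apply',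
        hh]
    · rintro ⟨S, hS⟩ x hx
      simp only [LinearMap.mem_ker, Matrix.mulVecLin_apply] at hx ⊢
      rw [← hS, ← Matrix.mulVec_mulVec, hx, Matrix.mulVec_zero]
  · intro S hS b
    simp only [μf, ηf, Matrix.mulVec_mulVec, ← Matrix.mul_assoc, hS]
end

section
/- Assume the Markov blanket condition Π_{ημ} = 0 and let S ∈ ℝ^{dη×dμ} be a matrix with S Σ_{μb} = Σ_{ηb} (a linear synchronisation map). Define the free energy F(b, μ) := ½ (S μ − 𝛈(b))ᵀ Π_η (S μ − 𝛈(b)) + ½ [b, μ]ᵀ (Σ_{b:μ})⁻¹ [b, μ]. Then for every blanket state b ∈ ℝ^{db}, the function μ ↦ F(b, μ) attains its minimum uniquely at μ = 𝛍(b); that is, F(b, μ) ≥ F(b, 𝛍(b)) for all μ, with equality only when μ = 𝛍(b). -/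
open Matrix

private lemma sumQuad {α β : Type*} [Fintype α] [Fintype β]
    (M : Matrix (α ⊕ β) (α ⊕ β) ℝ) (v : α → ℝ) (w : β → ℝ) :
    Sum.elim v w ⬝ᵥ M *ᵥ Sum.elim v w =
      v ⬝ᵥ (M.toBlocks₁₁ *ᵥ v) + v ⬝ᵥ (M.toBlocks₁₂ *ᵥ w) +
      (w ⬝ᵥ (M.toBlocks₂₁ *ᵥ v) + w ⬝ᵥ (M.toBlocks₂₂ *ᵥ w)) := by
  conv_lhs => rw [← fromBlocks_toBlocks M, fromBlocks_mulVec]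
  rw [sumElim_dotProduct_sumElim, dotProduct_add, dotProduct_add]
  simp [Sum.elim_comp_inl, Sum.elim_comp_inr]

private lemma posDef_submatrix_inl {α β : Type*} [Fintype α] [Fintype β]
    [DecidableEq α] [DecidableEq β]
    {M : Matrix (α ⊕ β) (α ⊕ β) ℝ} (hM : M.PosDef) :
    (M.submatrix Sum.inl Sum.inl).PosDef := by
  refine posDef_iff_dotProduct_mulVec.mpr ⟨?_, ?_⟩
  · have h := hM.1
    rw [Matrix.IsHermitian] at h ⊢
    rw [conjTranspose_submatrix, h]
  · intro x hx
    have hx' : Sum.elim x (0 : β → ℝ) ≠ 0 := fun h =>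
      hx (funext fun i => congrFun h (Sum.inl i))
    have h := hM.dotProduct_mulVec_pos hx'
    rw [star_trivial, sumQuad] at h
    simp only [mulVec_zero, dotProduct_zero, zero_dotProduct, add_zero, zero_add] at h
    simp only [star_trivial]
    exact h

private lemma posDef_submatrix_inr {α β : Type*} [Fintype α] [Fintype β]
    [DecidableEq α] [DecidableEq β]
    {M : Matrix (α ⊕ β) (α ⊕ β) ℝ} (hM : M.PosDef) :
    (M.submatrix Sum.inr Sum.inr).PosDef := by
  refine posDef_iff_dotProduct_mulVec.mpr ⟨?_, ?_⟩
  · have h := hM.1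
    rw [Matrix.IsHermitian] at h ⊢
    rw [conjTranspose_submatrix, h]
  · intro x hx
    have hx' : Sum.elim (0 : α → ℝ) x ≠ 0 := fun h =>
      hx (funext fun i => congrFun h (Sum.inr i))
    have h := hM.dotProduct_mulVec_pos hx'
    rw [star_trivial, sumQuad] at h
    simp only [mulVec_zero, dotProduct_zero, zero_dotProduct, add_zero, zero_add] at h
    simp only [star_trivial]
    exact h

set_option maxHeartbeats 2000000 in
/-- Assume the Markov blanket condition `Π_{ημ} = 0` and let `S` be a
linear synchronisation map, i.e. `S Σ_{μb} = Σ_{ηb}`. Define the free energy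
`F(b, μ) := ½ (Sμ − 𝛈(b))ᵀ Π_η (Sμ − 𝛈(b)) + ½ [b,μ]ᵀ (Σ_{b:μ})⁻¹ [b,μ]`.
Then for every blanket state `b`, `μ ↦ F(b, μ)` attains its minimum uniquely at
`μ = 𝛍(b)`. Here `Prec` is the precision matrix `Π`, `Cov := Prec⁻¹` is `Σ`,
`𝛈(b) = Σ_{ηb} Σ_b⁻¹ b`, `𝛍(b) = Σ_{μb} Σ_b⁻¹ b`; the index blocks are `η = Sum.inl`,
`b = Sum.inr ∘ Sum.inl`, `μ = Sum.inr ∘ Sum.inr`. -/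
theorem stmt_10 (dη db dμ : ℕ) (hdη : 0 < dη) (hdb : 0 < db) (hdμ : 0 < dμ)
    (Prec : Matrix (Fin dη ⊕ (Fin db ⊕ Fin dμ)) (Fin dη ⊕ (Fin db ⊕ Fin dμ)) ℝ)
    (hPrec : Prec.PosDef)
    (hMB : Prec.submatrix Sum.inl (Sum.inr ∘ Sum.inr) = 0)
    (S : Matrix (Fin dη) (Fin dμ) ℝ)
    (hS : S * Prec⁻¹.submatrix (Sum.inr ∘ Sum.inr) (Sum.inr ∘ Sum.inl) =
      Prec⁻¹.submatrix Sum.inl (Sum.inr ∘ Sum.inl)) :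
    let Cov := Prec⁻¹
    let Pη := Prec.submatrix Sum.inl Sum.inl
    let Cηb := Cov.submatrix Sum.inl (Sum.inr ∘ Sum.inl)
    let Cμb := Cov.submatrix (Sum.inr ∘ Sum.inr) (Sum.inr ∘ Sum.inl)
    let Cb := Cov.submatrix (Sum.inr ∘ Sum.inl) (Sum.inr ∘ Sum.inl)
    let Cbμ := Cov.submatrix (Sum.inr : Fin db ⊕ Fin dμ → _) Sum.inr
    let ηf : (Fin db → ℝ) → (Fin dη → ℝ) := fun b => (Cηb * Cb⁻¹) *ᵥ b
    let μf : (Fin db → ℝ) → (Fin dμ → ℝ) := fun b => (Cμb * Cb⁻¹) *ᵥ b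
    let F : (Fin db → ℝ) → (Fin dμ → ℝ) → ℝ := fun b μ =>
      (1 / 2 : ℝ) * ((S *ᵥ μ - ηf b) ⬝ᵥ Pη *ᵥ (S *ᵥ μ - ηf b)) +
        (1 / 2 : ℝ) * (Sum.elim b μ ⬝ᵥ Cbμ⁻¹ *ᵥ Sum.elim b μ)
    ∀ (b : Fin db → ℝ) (μ : Fin dμ → ℝ),
      F b (μf b) ≤ F b μ ∧ (F b μ = F b (μf b) → μ = μf b) := by
  intro Cov Pη Cηb Cμb Cb Cbμ ηf μf F b μ
  have hCov : Cov.PosDef := hPrec.inv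
  have hPη : Pη.PosDef := posDef_submatrix_inl hPrec
  have hCbμ : Cbμ.PosDef := posDef_submatrix_inr hCov
  have hQ : (Cbμ⁻¹).PosDef := hCbμ.inv
  have hT : ((Cbμ⁻¹).toBlocks₂₂).PosDef := posDef_submatrix_inr hQ
  have hCb : Cb.PosDef := posDef_submatrix_inl hCbμ
  have hCbdet : IsUnit Cb.det := (Matrix.isUnit_iff_isUnit_det _).mp hCb.isUnit
  have hQmul : Cbμ⁻¹ * Cbμ = 1 :=
    Matrix.nonsing_inv_mul _ ((Matrix.isUnit_iff_isUnit_det _).mp hCbμ.isUnit)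
  -- b recovered from u := Cb⁻¹ *ᵥ b
  have hb : Cb *ᵥ (Cb⁻¹ *ᵥ b) = b := by
    rw [Matrix.mulVec_mulVec, Matrix.mul_nonsing_inv _ hCbdet, Matrix.one_mulVec]
  have hv : Cbμ *ᵥ Sum.elim (Cb⁻¹ *ᵥ b) 0 = Sum.elim b (μf b) := by
    conv_lhs => rw [← fromBlocks_toBlocks Cbμ, fromBlocks_mulVec]
    simp only [Sum.elim_comp_inl, Sum.elim_comp_inr, mulVec_zero, add_zero]
    show Sum.elim (Cb *ᵥ (Cb⁻¹ *ᵥ b)) (Cμb *ᵥ (Cb⁻¹ *ᵥ b)) = Sum.elim b (μf b)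
    rw [hb, Matrix.mulVec_mulVec]
  have hQv : Cbμ⁻¹ *ᵥ Sum.elim b (μf b) = Sum.elim (Cb⁻¹ *ᵥ b) 0 := by
    rw [← hv, Matrix.mulVec_mulVec, hQmul, Matrix.one_mulVec]
  have hQt : (Cbμ⁻¹)ᵀ = Cbμ⁻¹ := by
    have h := hQ.1
    rwa [Matrix.IsHermitian, conjTranspose_eq_transpose_of_trivial] at h
  -- splitting
  have hsplit : Sum.elim b μ = Sum.elim b (μf b) + Sum.elim (0 : Fin db → ℝ) (μ - μf b) := by
    funext i
    cases i with
    | inl i => simp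
    | inr i => simp
  have hcross1 : Sum.elim (0 : Fin db → ℝ) (μ - μf b) ⬝ᵥ Cbμ⁻¹ *ᵥ Sum.elim b (μf b) = 0 := by
    rw [hQv, sumElim_dotProduct_sumElim]
    simp
  have hcross2 : Sum.elim b (μf b) ⬝ᵥ Cbμ⁻¹ *ᵥ Sum.elim (0 : Fin db → ℝ) (μ - μf b) = 0 := by
    rw [dotProduct_mulVec, ← Matrix.mulVec_transpose, hQt, hQv, sumElim_dotProduct_sumElim]
    simp
  have hww : Sum.elim (0 : Fin db → ℝ) (μ - μf b) ⬝ᵥ Cbμ⁻¹ *ᵥ Sum.elim 0 (μ - μf b)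
      = (μ - μf b) ⬝ᵥ (Cbμ⁻¹).toBlocks₂₂ *ᵥ (μ - μf b) := by
    rw [sumQuad]
    simp
  have hG : Sum.elim b μ ⬝ᵥ Cbμ⁻¹ *ᵥ Sum.elim b μ
      = Sum.elim b (μf b) ⬝ᵥ Cbμ⁻¹ *ᵥ Sum.elim b (μf b)
        + (μ - μf b) ⬝ᵥ (Cbμ⁻¹).toBlocks₂₂ *ᵥ (μ - μf b) := by
    rw [hsplit, add_dotProduct, mulVec_add, dotProduct_add, dotProduct_add,
      hcross1, hcross2, hww]
    ring
  -- first term vanishes at μf b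
  have hS' : S * Cμb = Cηb := hS
  have hSμ : S *ᵥ μf b = ηf b := by
    show S *ᵥ ((Cμb * Cb⁻¹) *ᵥ b) = (Cηb * Cb⁻¹) *ᵥ b
    rw [Matrix.mulVec_mulVec, ← Matrix.mul_assoc, hS']
  have hzero : S *ᵥ μf b - ηf b = 0 := by rw [hSμ, sub_self]
  have hFμval : F b (μf b)
      = (1 / 2 : ℝ) * (Sum.elim b (μf b) ⬝ᵥ Cbμ⁻¹ *ᵥ Sum.elim b (μf b)) := by
    show (1 / 2 : ℝ) * ((S *ᵥ μf b - ηf b) ⬝ᵥ Pη *ᵥ (S *ᵥ μf b - ηf b)) +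
        (1 / 2 : ℝ) * (Sum.elim b (μf b) ⬝ᵥ Cbμ⁻¹ *ᵥ Sum.elim b (μf b)) = _
    rw [hzero]
    simp
  have hFval : F b μ = (1 / 2 : ℝ) * ((S *ᵥ μ - ηf b) ⬝ᵥ Pη *ᵥ (S *ᵥ μ - ηf b))
      + (1 / 2 : ℝ) * (Sum.elim b (μf b) ⬝ᵥ Cbμ⁻¹ *ᵥ Sum.elim b (μf b))
      + (1 / 2 : ℝ) * ((μ - μf b) ⬝ᵥ (Cbμ⁻¹).toBlocks₂₂ *ᵥ (μ - μf b)) := by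
    show (1 / 2 : ℝ) * ((S *ᵥ μ - ηf b) ⬝ᵥ Pη *ᵥ (S *ᵥ μ - ηf b)) +
        (1 / 2 : ℝ) * (Sum.elim b μ ⬝ᵥ Cbμ⁻¹ *ᵥ Sum.elim b μ) = _
    rw [hG]
    ring
  have hfq : 0 ≤ (S *ᵥ μ - ηf b) ⬝ᵥ Pη *ᵥ (S *ᵥ μ - ηf b) := by
    have h := hPη.posSemidef.dotProduct_mulVec_nonneg (S *ᵥ μ - ηf b)
    rwa [star_trivial] at h
  have ht : 0 ≤ (μ - μf b) ⬝ᵥ (Cbμ⁻¹).toBlocks₂₂ *ᵥ (μ - μf b) := by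
    have h := hT.posSemidef.dotProduct_mulVec_nonneg (μ - μf b)
    rwa [star_trivial] at h
  constructor
  · rw [hFval, hFμval]; linarith
  · intro h
    rw [hFval, hFμval] at h
    have ht0 : (μ - μf b) ⬝ᵥ (Cbμ⁻¹).toBlocks₂₂ *ᵥ (μ - μf b) = 0 := by linarith
    have hδ0 : μ - μf b = 0 := by
      by_contra hne
      have hp := hT.dotProduct_mulVec_pos hne
      rw [star_trivial] at hp
      exact absurd ht0 (ne_of_gt hp)
    exact sub_eq_zero.mp hδ0
end

section
/- Let p: ℝ^d → ℝ be smooth and strictly positive, let ς: ℝ^d → ℝ^{d×m} be a smooth matrix field with Γ := ς ςᵀ / 2, and let Q: ℝ^d → ℝ^{d×d} be a smooth antisymmetric matrix field. Define the drift f := Γ ∇log p + ∇·Γ + Q ∇log p + ∇·Q. Then p solves the stationary Fokker–Planck equation: ∇·( −f p + ∇·(Γ p) ) = 0, where ∇·(Γ p) denotes the vector field with components Σ_j ∂(Γ_{ij} p)/∂x_j. -/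
open Matrix

/-- Partial derivative in the `i`-th coordinate direction of a function on `ℝ^d`. -/
noncomputable def pderiv' {d : ℕ} (i : Fin d) (f : (Fin d → ℝ) → ℝ) (x : Fin d → ℝ) : ℝ :=
  fderiv ℝ f x (Pi.single i 1)

section helpers
variable {d : ℕ}

lemma contDiff_pderiv' {f : (Fin d → ℝ) → ℝ} (hf : ContDiff ℝ (⊤ : ℕ∞) f) (j : Fin d) :
    ContDiff ℝ (⊤ : ℕ∞) (fun y => pderiv' j f y) :=
  (hf.fderiv_right (by simp)).clm_apply contDiff_const

lemma pderiv'_fun_neg (f : (Fin d → ℝ) → ℝ) (i : Fin d) (x : Fin d → ℝ) :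
    pderiv' i (fun y => -f y) x = -pderiv' i f x := by
  simp [pderiv', fderiv_neg]

lemma pderiv'_fun_sum {ι : Type*} (s : Finset ι) {F : ι → (Fin d → ℝ) → ℝ} {x : Fin d → ℝ}
    (hF : ∀ j ∈ s, DifferentiableAt ℝ (F j) x) (i : Fin d) :
    pderiv' i (fun y => ∑ j ∈ s, F j y) x = ∑ j ∈ s, pderiv' i (F j) x := by
  simp [pderiv', fderiv_fun_sum hF]

lemma pderiv'_fun_mul {f g : (Fin d → ℝ) → ℝ} {x : Fin d → ℝ} (hf : DifferentiableAt ℝ f x)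
    (hg : DifferentiableAt ℝ g x) (i : Fin d) :
    pderiv' i (fun y => f y * g y) x = pderiv' i f x * g x + f x * pderiv' i g x := by
  simp [pderiv', fderiv_fun_mul hf hg]; ring

lemma pderiv'_fun_log {f : (Fin d → ℝ) → ℝ} {x : Fin d → ℝ} (hf : DifferentiableAt ℝ f x)
    (hfx : f x ≠ 0) (i : Fin d) :
    pderiv' i (fun y => Real.log (f y)) x = pderiv' i f x / f x := by
  rw [pderiv', (hf.hasFDerivAt.log hfx).fderiv]
  simp [pderiv']; ring

lemma pderiv'_comm {g : (Fin d → ℝ) → ℝ} (hg : ContDiff ℝ (⊤ : ℕ∞) g) (i j : Fin d) (x : Fin d → ℝ) :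
    pderiv' i (fun y => pderiv' j g y) x = pderiv' j (fun y => pderiv' i g y) x := by
  have hd : Differentiable ℝ (fderiv ℝ g) := (hg.fderiv_right (m := (⊤ : ℕ∞)) (by simp)).differentiable (by simp)
  have key : ∀ v w : Fin d → ℝ, fderiv ℝ (fun y => fderiv ℝ g y v) x w
      = fderiv ℝ (fderiv ℝ g) x w v := by
    intro v w
    have h1 : (fun y => fderiv ℝ g y v) = (ContinuousLinearMap.apply ℝ ℝ v) ∘ fderiv ℝ g := rfl
    rw [h1, fderiv_comp x (ContinuousLinearMap.apply ℝ ℝ v).differentiableAt (hd x)]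
    simp
  have hsymm := second_derivative_symmetric
    (fun y => (hg.differentiable (by simp) y).hasFDerivAt) ((hd x).hasFDerivAt)
    (Pi.single j 1) (Pi.single i 1)
  simp only [pderiv', key]
  exact hsymm.symm

lemma aux_alg (d : ℕ) (a b c e dp : Fin d → ℝ) (P : ℝ) (hP : P ≠ 0) :
    -((∑ j, a j * (dp j / P)) + (∑ j, b j) + (∑ j, c j * (dp j / P)) + ∑ j, e j) * P
      + ∑ j, (b j * P + a j * dp j)
    = ∑ j, -(e j * P + c j * dp j) := by
  simp only [← mul_div_assoc, ← Finset.sum_div, Finset.sum_add_distrib, ← Finset.sum_neg_distrib,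
    neg_add, ← Finset.sum_mul]
  field_simp
  simp only [Finset.mul_sum, Finset.sum_mul]
  ring_nf; simp only [Finset.sum_neg_distrib]; ring

end helpers

/-- Let `p : ℝ^d → ℝ` be smooth and strictly positive, `ς : ℝ^d → ℝ^{d×m}`
a smooth matrix field with `Γ := ς ςᵀ / 2`, and `Q : ℝ^d → ℝ^{d×d}` a smooth antisymmetric
matrix field. Define the drift `f := Γ ∇log p + ∇·Γ + Q ∇log p + ∇·Q`. Then `p` solves the
stationary Fokker–Planck equation `∇·( −f p + ∇·(Γ p) ) = 0`, where `(∇·A)_i = Σ_j ∂_j A_{ij}`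
for a matrix field and `∇·v = Σ_i ∂_i v_i` for a vector field. -/
theorem stmt_13 (d m : ℕ) (p : (Fin d → ℝ) → ℝ)
    (hp : ContDiff ℝ (⊤ : ℕ∞) p) (hppos : ∀ x, 0 < p x)
    (ς : (Fin d → ℝ) → Matrix (Fin d) (Fin m) ℝ)
    (hς : ∀ i j, ContDiff ℝ (⊤ : ℕ∞) (fun x => ς x i j))
    (Q : (Fin d → ℝ) → Matrix (Fin d) (Fin d) ℝ)
    (hQ : ∀ i j, ContDiff ℝ (⊤ : ℕ∞) (fun x => Q x i j))
    (hQanti : ∀ x, Q x = -(Q x)ᵀ) :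
    let Γ : (Fin d → ℝ) → Matrix (Fin d) (Fin d) ℝ := fun x => (1 / 2 : ℝ) • (ς x * (ς x)ᵀ)
    let gradlogp : (Fin d → ℝ) → (Fin d → ℝ) := fun x j => pderiv' j (fun y => Real.log (p y)) x
    let f : (Fin d → ℝ) → (Fin d → ℝ) := fun x =>
      Γ x *ᵥ gradlogp x + (fun i => ∑ j, pderiv' j (fun z => Γ z i j) x) +
      Q x *ᵥ gradlogp x + (fun i => ∑ j, pderiv' j (fun z => Q z i j) x)
    ∀ x : Fin d → ℝ,
      ∑ i, pderiv' i
        (fun y => -(f y i) * p y + ∑ j, pderiv' j (fun z => Γ z i j * p z) y) x = 0 := by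
  intro Γ gradlogp f x
  have hpd : Differentiable ℝ p := hp.differentiable (by simp)
  have hΓ : ∀ i j, ContDiff ℝ (⊤ : ℕ∞) (fun z => Γ z i j) := by
    intro i j
    simp only [Γ, Matrix.smul_apply, Matrix.mul_apply, Matrix.transpose_apply, smul_eq_mul]
    exact contDiff_const.mul (ContDiff.sum fun k _ => (hς i k).mul (hς j k))
  have hQp : ∀ i j, ContDiff ℝ (⊤ : ℕ∞) (fun z => Q z i j * p z) := fun i j => (hQ i j).mul hp
  have key : ∀ i, (fun y => -(f y i) * p y + ∑ j, pderiv' j (fun z => Γ z i j * p z) y)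
      = (fun y => ∑ j, -(pderiv' j (fun z => Q z i j * p z) y)) := by
    intro i
    funext y
    have hpy : p y ≠ 0 := (hppos y).ne'
    have hlog : ∀ j, pderiv' j (fun z => Real.log (p z)) y = pderiv' j p y / p y :=
      fun j => pderiv'_fun_log (hpd y) hpy j
    have hmulΓ : ∀ j, pderiv' j (fun z => Γ z i j * p z) y
        = pderiv' j (fun z => Γ z i j) y * p y + Γ y i j * pderiv' j p y :=
      fun j => pderiv'_fun_mul ((hΓ i j).differentiable (by simp) y) (hpd y) j
    have hmulQ : ∀ j, pderiv' j (fun z => Q z i j * p z) y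
        = pderiv' j (fun z => Q z i j) y * p y + Q y i j * pderiv' j p y :=
      fun j => pderiv'_fun_mul ((hQ i j).differentiable (by simp) y) (hpd y) j
    simp only [f, gradlogp, Pi.add_apply, Matrix.mulVec, dotProduct, hlog, hmulΓ, hmulQ]
    exact aux_alg d (fun j => Γ y i j) (fun j => pderiv' j (fun z => Γ z i j) y)
      (fun j => Q y i j) (fun j => pderiv' j (fun z => Q z i j) y)
      (fun j => pderiv' j p y) (p y) hpy
  simp only [key]
  have hsum : ∀ i, pderiv' i (fun y => ∑ j, -(pderiv' j (fun z => Q z i j * p z) y)) x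
      = ∑ j, -(pderiv' i (fun y => pderiv' j (fun z => Q z i j * p z) y) x) := by
    intro i
    rw [pderiv'_fun_sum Finset.univ (F := fun j y => -(pderiv' j (fun z => Q z i j * p z) y)) (fun j _ =>
      (((contDiff_pderiv' (hQp i j) j).differentiable (by simp)).neg x)) i]
    exact Finset.sum_congr rfl fun j _ => pderiv'_fun_neg _ i x
  simp only [hsum]
  set D : Fin d → Fin d → ℝ :=
    fun i j => pderiv' i (fun y => pderiv' j (fun z => Q z i j * p z) y) x with hDdef
  have hD : ∀ i j, D i j = -(D j i) := by
    intro i j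
    have hQij : (fun z => Q z i j * p z) = fun z => -(Q z j i * p z) := by
      funext z
      have h0 : Q z i j = -(Q z j i) := by
        conv_lhs => rw [hQanti z]
        simp [Matrix.transpose_apply]
      rw [h0]; ring
    have h1 : (fun y => pderiv' j (fun z => -(Q z j i * p z)) y)
        = fun y => -(pderiv' j (fun z => Q z j i * p z) y) :=
      funext fun y => pderiv'_fun_neg _ j y
    simp only [hDdef, hQij, h1, pderiv'_fun_neg]
    rw [pderiv'_comm (hQp j i) i j x]
  have hS : (∑ i, ∑ j, D i j) = -(∑ i, ∑ j, D i j) := by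
    conv_lhs => rw [Finset.sum_comm]
    rw [← Finset.sum_neg_distrib]
    refine Finset.sum_congr rfl fun j _ => ?_
    rw [← Finset.sum_neg_distrib]
    exact Finset.sum_congr rfl fun i _ => hD i j
  have hS0 : (∑ i, ∑ j, D i j) = 0 := by linarith [hS]
  simp only [← hDdef, Finset.sum_neg_distrib, hS0, neg_zero]
  exact neg_eq_zero.mpr hS0
end
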